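/- Let G be a finite group, ω a normalized 3-cocycle on G with values in ℂ*, H₁, H₂ subgroups of G, and ψᵢ a normalized 2-cochain on Hᵢ with dψᵢ = ω|_{Hᵢ} for i = 1,2. For g ∈ G, define H^g := H₁ ∩ gH₂g⁻¹ and ψ^g(h,h') := ψ₁(h,h') · ψ₂(g⁻¹h'⁻¹g, g⁻¹h⁻¹g) · ω(hh'g, g⁻¹h'⁻¹g, g⁻¹h⁻¹g)⁻¹ · ω(h,h',g) · ω(h, h'g, g⁻¹h'⁻¹g) for h, h' ∈ H^g. Then ψ^g is a 2-cocycle on H^g, i.e. ψ^g(h',h'')·ψ^g(h,h'h'') = ψ^g(hh',h'')·ψ^g(h,h') for all h,h',h'' ∈ H^g. -/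

import Mathlib

/-- the twisted 2-cochain `ψ^g` on `H^g = H₁ ∩ gH₂g⁻¹` built from
normalized 2-cochains `ψᵢ` on `Hᵢ` with `dψᵢ = ω|_{Hᵢ}` is a 2-cocycle. -/
theorem psi_g_is_two_cocycle {G : Type*} [Group G] [Fintype G]
    (ω : G → G → G → ℂˣ)
    (hω : ∀ a b c d : G,
      ω b c d * ω a (b * c) d * ω a b c = ω (a * b) c d * ω a b (c * d))
    (hωnorm : ∀ a b c : G, a = 1 ∨ b = 1 ∨ c = 1 → ω a b c = 1)
    (H₁ H₂ : Subgroup G)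
    (ψ₁ ψ₂ : G → G → ℂˣ)
    (hψ₁norm : ∀ a b : G, a = 1 ∨ b = 1 → ψ₁ a b = 1)
    (hψ₂norm : ∀ a b : G, a = 1 ∨ b = 1 → ψ₂ a b = 1)
    (hψ₁ : ∀ a b c : G, a ∈ H₁ → b ∈ H₁ → c ∈ H₁ →
      ψ₁ b c * (ψ₁ (a * b) c)⁻¹ * ψ₁ a (b * c) * (ψ₁ a b)⁻¹ = ω a b c)
    (hψ₂ : ∀ a b c : G, a ∈ H₂ → b ∈ H₂ → c ∈ H₂ →
      ψ₂ b c * (ψ₂ (a * b) c)⁻¹ * ψ₂ a (b * c) * (ψ₂ a b)⁻¹ = ω a b c)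
    (g : G)
    (ψg : G → G → ℂˣ)
    (hψg : ∀ h h' : G, ψg h h' =
      ψ₁ h h' * ψ₂ (g⁻¹ * h'⁻¹ * g) (g⁻¹ * h⁻¹ * g) *
        (ω (h * h' * g) (g⁻¹ * h'⁻¹ * g) (g⁻¹ * h⁻¹ * g))⁻¹ *
        ω h h' g * ω h (h' * g) (g⁻¹ * h'⁻¹ * g)) :
    ∀ h h' h'' : G,
      (h ∈ H₁ ∧ g⁻¹ * h * g ∈ H₂) →
      (h' ∈ H₁ ∧ g⁻¹ * h' * g ∈ H₂) →
      (h'' ∈ H₁ ∧ g⁻¹ * h'' * g ∈ H₂) →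
      ψg h' h'' * ψg h (h' * h'') = ψg (h * h') h'' * ψg h h' := by
  intro x y z hxm hym hzm
  obtain ⟨hx1, hx2⟩ := hxm
  obtain ⟨hy1, hy2⟩ := hym
  obtain ⟨hz1, hz2⟩ := hzm
  have mx : g⁻¹ * x⁻¹ * g ∈ H₂ := by
    have := inv_mem hx2; simpa [mul_inv_rev, mul_assoc] using this
  have my : g⁻¹ * y⁻¹ * g ∈ H₂ := by
    have := inv_mem hy2; simpa [mul_inv_rev, mul_assoc] using this
  have mz : g⁻¹ * z⁻¹ * g ∈ H₂ := by
    have := inv_mem hz2; simpa [mul_inv_rev, mul_assoc] using this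
  have D1 := hψ₁ x y z hx1 hy1 hz1
  have D2 := hψ₂ (g⁻¹ * z⁻¹ * g) (g⁻¹ * y⁻¹ * g) (g⁻¹ * x⁻¹ * g) mz my mx
  have P1 := hω x y z g
  have P2 := hω x y (z * g) (g⁻¹ * z⁻¹ * g)
  have P3 := hω x (y * (z * g)) (g⁻¹ * z⁻¹ * g) (g⁻¹ * y⁻¹ * g)
  have P4 := hω (x * (y * (z * g))) (g⁻¹ * z⁻¹ * g) (g⁻¹ * y⁻¹ * g) (g⁻¹ * x⁻¹ * g)
  rw [hψg, hψg, hψg, hψg]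
  simp only [mul_inv_rev, mul_assoc, inv_mul_cancel_left, mul_inv_cancel_left,
    inv_inv] at D1 D2 P1 P2 P3 P4 ⊢
  rw [Units.ext_iff]
  have D1c := congrArg Units.val D1
  have D2c := congrArg Units.val D2
  have P1c := congrArg Units.val P1
  have P2c := congrArg Units.val P2
  have P3c := congrArg Units.val P3
  have P4c := congrArg Units.val P4
  push_cast at D1c D2c P1c P2c P3c P4c ⊢
  field_simp at D1c D2c P1c P2c P3c P4c ⊢
  linear_combination ((↑(ψ₂ (g⁻¹ * (z⁻¹ * g)) (g⁻¹ * (y⁻¹ * g))) : ℂ) * (↑(ω y z g) : ℂ) * (↑(ω y (z * g) (g⁻¹ * (z⁻¹ * g))) : ℂ) * (↑(ψ₂ (g⁻¹ * (z⁻¹ * (y⁻¹ * g))) (g⁻¹ * (x⁻¹ * g))) : ℂ) * (↑(ω x (y * z) g) : ℂ) * (↑(ω x (y * (z * g)) (g⁻¹ * (z⁻¹ * (y⁻¹ * g)))) : ℂ) * (↑(ω (x * (y * (z * g))) (g⁻¹ * (z⁻¹ * g)) (g⁻¹ * (y⁻¹ * (x⁻¹ * g)))) : ℂ) * (↑(ω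 (x * (y * g)) (g⁻¹ * (y⁻¹ * g)) (g⁻¹ * (x⁻¹ * g))) : ℂ)) * D1c - ((↑(ω y (z * g) (g⁻¹ * (z⁻¹ * g))) : ℂ) * (↑(ω x (y * (z * g)) (g⁻¹ * (z⁻¹ * (y⁻¹ * g)))) : ℂ) * (↑(ψ₁ (x * y) z) : ℂ) * (↑(ψ₁ x y) : ℂ) * (↑(ω (x * y) z g) : ℂ) * (↑(ω x y (z * g)) : ℂ) * (↑(ω (x * (y * (z * g))) (g⁻¹ * (z⁻¹ * (y⁻¹ * g))) (g⁻¹ * (x⁻¹ * g))) : ℂ) * (↑(ω (x * (y * (z * g))) (g⁻¹ * (z⁻¹ * g)) (g⁻¹ * (y⁻¹ * g))) : ℂ)) * D2c + ((↑(ψ₂ (g⁻¹ * (z⁻¹ * g)) (g⁻¹ * (y⁻¹ * g))) : ℂ) * (↑(ω y (z * g) (g⁻¹ * (z⁻¹ * g))) : ℂ) * (↑(ψ₂ (g⁻¹ * (z⁻¹ * (y⁻¹ * g))) (g⁻¹ * (x⁻¹ * g))) : ℂ) * (↑(ω x (y * (z * g)) (g⁻¹ * (z⁻¹ * (y⁻¹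 * g)))) : ℂ) * (↑(ω (x * (y * (z * g))) (g⁻¹ * (z⁻¹ * g)) (g⁻¹ * (y⁻¹ * (x⁻¹ * g)))) : ℂ) * (↑(ω (x * (y * g)) (g⁻¹ * (y⁻¹ * g)) (g⁻¹ * (x⁻¹ * g))) : ℂ) * (↑(ψ₁ (x * y) z) : ℂ) * (↑(ψ₁ x y) : ℂ)) * P1c +
    ((↑(ψ₁ (x * y) z) : ℂ) * (↑(ψ₁ x y) : ℂ) * (↑(ω (x * y) z g) : ℂ) * (↑(ω (x * (y * (z * g))) (g⁻¹ * (z⁻¹ * (y⁻¹ * g))) (g⁻¹ * (x⁻¹ * g))) : ℂ) * (↑(ψ₂ (g⁻¹ * (y⁻¹ * g)) (g⁻¹ * (x⁻¹ * g))) : ℂ) * (↑(ψ₂ (g⁻¹ * (z⁻¹ * g)) (g⁻¹ * (y⁻¹ * (x⁻¹ * g)))) : ℂ) * (↑(ω (y * (z * g)) (g⁻¹ * (z⁻¹ * g)) (g⁻¹ * (y⁻¹ * g))) : ℂ) * (↑(ω x (y * g) (g⁻¹ * (y⁻¹ * g))) : ℂ)) * P2c - ((↑(ω y (z * g) (g⁻¹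 * (z⁻¹ * g))) : ℂ) * (↑(ψ₁ (x * y) z) : ℂ) * (↑(ψ₁ x y) : ℂ) * (↑(ω (x * y) z g) : ℂ) * (↑(ω x y (z * g)) : ℂ) * (↑(ω (x * (y * (z * g))) (g⁻¹ * (z⁻¹ * (y⁻¹ * g))) (g⁻¹ * (x⁻¹ * g))) : ℂ) * (↑(ψ₂ (g⁻¹ * (y⁻¹ * g)) (g⁻¹ * (x⁻¹ * g))) : ℂ) * (↑(ψ₂ (g⁻¹ * (z⁻¹ * g)) (g⁻¹ * (y⁻¹ * (x⁻¹ * g)))) : ℂ)) * P3c - ((↑(ψ₂ (g⁻¹ * (z⁻¹ * g)) (g⁻¹ * (y⁻¹ * g))) : ℂ) * (↑(ω y (z * g) (g⁻¹ * (z⁻¹ * g))) : ℂ) * (↑(ψ₂ (g⁻¹ * (z⁻¹ * (y⁻¹ * g))) (g⁻¹ * (x⁻¹ * g))) : ℂ) * (↑(ω x (y * (z * g)) (g⁻¹ * (z⁻¹ * (y⁻¹ * g)))) : ℂ) * (↑(ψ₁ (x * y) z) : ℂ) * (↑(ψ₁ x y) : ℂ) * (↑(ω (x * y) z g) : ℂ)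 * (↑(ω x y (z * g)) : ℂ)) * P4c
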